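/- arXiv:1803.05493 — 3 statements merged into one kernel-verified Lean document; each statement's English description precedes it below -/
import Mathlib

section
/- Let Γ and Λ be finite simplicial graphs, let l ⊆ A(Γ) and l' ⊆ A(Λ) be standard geodesics, and suppose there exists a based quasi-isometry f : (A(Γ),l) → (A(Λ),l'). Then l' is an 𝓡-geodesic if and only if l is an 𝓡-geodesic. -/
noncomputable section

universe u v

/-- Word metric (distance function) on a group with respect to a generating set `S`. -/
def wordDist {G : Type*} [Group G] (S : Set G) (g h : G) : ℝ :=
  sInf ((fun l : List G => (l.length : ℝ)) ''
    {l : List G | (∀ x ∈ l, x ∈ S ∨ x⁻¹ ∈ S) ∧ g * l.prod = h})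

/-- `f` is `(K, A)`-coarse Lipschitz. -/
def CoarseLipschitzWith {X Y : Type*} (K A : ℝ) (dX : X → X → ℝ) (dY : Y → Y → ℝ)
    (f : X → Y) : Prop :=
  ∀ x x', dY (f x) (f x') ≤ K * dX x x' + A

/-- `f` is a `(K, A)`-quasi-isometry. -/
def IsQIWith {X Y : Type*} (K A : ℝ) (dX : X → X → ℝ) (dY : Y → Y → ℝ) (f : X → Y) : Prop :=
  1 ≤ K ∧ 0 ≤ A ∧
  (∀ x x', dX x x' / K - A ≤ dY (f x) (f x') ∧ dY (f x) (f x') ≤ K * dX x x' + A) ∧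
  (∀ y, ∃ x, dY (f x) y ≤ A)

/-- `f` is a quasi-isometry. -/
def IsQI {X Y : Type*} (dX : X → X → ℝ) (dY : Y → Y → ℝ) (f : X → Y) : Prop :=
  ∃ K A : ℝ, IsQIWith K A dX dY f

/-- The Hausdorff distance between `S` and `T` (w.r.t. the distance `d`) is at most `r`. -/
def HausLE {X : Type*} (d : X → X → ℝ) (S T : Set X) (r : ℝ) : Prop :=
  (∀ s ∈ S, ∃ t ∈ T, d s t ≤ r) ∧ (∀ t ∈ T, ∃ s ∈ S, d s t ≤ r)

/-- `S` and `T` are at finite Hausdorff distance. -/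
def FinHaus {X : Type*} (d : X → X → ℝ) (S T : Set X) : Prop :=
  ∃ r : ℝ, 0 ≤ r ∧ HausLE d S T r

/-- The commutator relations of a right-angled Artin group. -/
def raagRels {V : Type} (Γ : SimpleGraph V) : Set (FreeGroup V) :=
  {r | ∃ x y : V, Γ.Adj x y ∧
    r = FreeGroup.of x * FreeGroup.of y * (FreeGroup.of x)⁻¹ * (FreeGroup.of y)⁻¹}

/-- The right-angled Artin group `A(Γ)` of a simplicial graph `Γ`. -/
abbrev Raag {V : Type} (Γ : SimpleGraph V) : Type := PresentedGroup (raagRels Γ)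

/-- The generator of `Raag Γ` corresponding to a vertex. -/
def raagGen {V : Type} (Γ : SimpleGraph V) (x : V) : Raag Γ :=
  PresentedGroup.of (rels := raagRels Γ) x

/-- The word metric on `Raag Γ` with respect to the vertex generators. -/
def raagDist {V : Type} (Γ : SimpleGraph V) : Raag Γ → Raag Γ → ℝ :=
  wordDist (Set.range (raagGen Γ))

/-- `A(Γ)` and `A(Λ)` are quasi-isometric (w.r.t. the vertex word metrics). -/
def RaagQI {V W : Type} (Γ : SimpleGraph V) (Λ : SimpleGraph W) : Prop :=
  ∃ f : Raag Γ → Raag Λ, IsQI (raagDist Γ) (raagDist Λ) f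

/-- A standard geodesic: the coset `g⟨v⟩`, recorded by a basepoint `g` and a label `v`. -/
structure StdGeod {V : Type} (Γ : SimpleGraph V) where
  base : Raag Γ
  label : V

/-- The parametrization `n ↦ g vⁿ` of a standard geodesic, identifying it with `ℤ`. -/
def StdGeod.param {V : Type} {Γ : SimpleGraph V} (l : StdGeod Γ) : ℤ → Raag Γ :=
  fun n => l.base * raagGen Γ l.label ^ n

/-- The underlying subset of a standard geodesic. -/
def StdGeod.carrier {V : Type} {Γ : SimpleGraph V} (l : StdGeod Γ) : Set (Raag Γ) :=
  Set.range l.param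

/-- Two standard geodesics are parallel if they are at finite Hausdorff distance. -/
def Parallel {V : Type} {Γ : SimpleGraph V} (l k : StdGeod Γ) : Prop :=
  FinHaus (raagDist Γ) l.carrier k.carrier

/-- A based quasi-isometry `(A(Γ), l) → (A(Λ), l')`. -/
def IsBasedQI {V W : Type} {Γ : SimpleGraph V} {Λ : SimpleGraph W}
    (f : Raag Γ → Raag Λ) (l : StdGeod Γ) (l' : StdGeod Λ) : Prop :=
  IsQI (raagDist Γ) (raagDist Λ) f ∧ FinHaus (raagDist Λ) (f '' l.carrier) l'.carrier

/-- `str(f, l, C) = r`: on `l`, the map `f` is `C`-close to `n ↦ ±⌊r n⌋ + b`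
(read through the identifications of `l` and `l'` with `ℤ`). -/
def StrWith {V W : Type} {Γ : SimpleGraph V} {Λ : SimpleGraph W}
    (f : Raag Γ → Raag Λ) (l : StdGeod Γ) (l' : StdGeod Λ) (C : ℝ) (r : ℚ) : Prop :=
  ∃ ε : ℤ, (ε = 1 ∨ ε = -1) ∧ ∃ b : ℤ,
    ∀ n : ℤ, raagDist Λ (f (l.param n)) (l'.param (ε * ⌊r * (n : ℚ)⌋ + b)) ≤ C

/-- The stretch factor `str(f, l)` (computed with respect to `l'`) is well-defined
and equals `r`. -/
def HasStr {V W : Type} {Γ : SimpleGraph V} {Λ : SimpleGraph W}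
    (f : Raag Γ → Raag Λ) (l : StdGeod Γ) (l' : StdGeod Λ) (r : ℚ) : Prop :=
  ∃ C : ℝ, 0 ≤ C ∧ StrWith f l l' C r

/-- `l` is an `𝓡`-geodesic. -/
def IsRGeod {V : Type} {Γ : SimpleGraph V} (l : StdGeod Γ) : Prop :=
  ∀ (W : Type) [Fintype W] (Λ : SimpleGraph W) (l' : StdGeod Λ)
    (f g : Raag Γ → Raag Λ),
    IsBasedQI f l l' → IsBasedQI g l l' →
    ∃ r : ℚ, HasStr f l l' r ∧ HasStr g l l' r

/-- The parallelism class `𝒮_l` of a standard geodesic (as a family of subsets). -/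
def parClass {V : Type} {Γ : SimpleGraph V} (l : StdGeod Γ) : Set (Set (Raag Γ)) :=
  {S | ∃ k : StdGeod Γ, S = k.carrier ∧ Parallel l k}

/-- The peripheral structure `𝒫_B` on `Raag Γ` determined by a set `B` of vertices. -/
def periph {V : Type} (Γ : SimpleGraph V) (B : Set V) : Set (Set (Set (Raag Γ))) :=
  {F | ∃ l : StdGeod Γ, l.label ∈ B ∧ F = parClass l}

/-- A `(K, A)`-relative quasi-isometry between spaces with peripheral structures. -/
def IsRelQIWith {X Y : Type*} (K A : ℝ) (dX : X → X → ℝ) (dY : Y → Y → ℝ)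
    (PX : Set (Set (Set X))) (PY : Set (Set (Set Y)))
    (f : X → Y) (fs : Set (Set X) → Set (Set Y)) : Prop :=
  IsQIWith K A dX dY f ∧
  Set.BijOn fs PX PY ∧
  ∀ F ∈ PX, (∀ a ∈ F, ∃ b ∈ fs F, HausLE dY (f '' a) b A) ∧
            (∀ b ∈ fs F, ∃ a ∈ F, HausLE dY (f '' a) b A)

/-- The two spaces with peripheral structures are relatively quasi-isometric. -/
def IsRelQI {X Y : Type*} (dX : X → X → ℝ) (dY : Y → Y → ℝ)
    (PX : Set (Set (Set X))) (PY : Set (Set (Set Y))) : Prop :=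
  ∃ (K A : ℝ) (f : X → Y) (fs : Set (Set X) → Set (Set Y)),
    IsRelQIWith K A dX dY PX PY f fs

/-- Left translation of a family of subsets of `Raag Γ`. -/
def translateFam {V : Type} {Γ : SimpleGraph V} (g : Raag Γ) (F : Set (Set (Raag Γ))) :
    Set (Set (Raag Γ)) :=
  (fun a => (fun x => g * x) '' a) '' F

/-- A decoration on `𝒫_B` that is invariant under the left translation action. -/
def DecorInvariant {V : Type} (Γ : SimpleGraph V) (B : Set V) {O : Type}
    (δ : Set (Set (Raag Γ)) → O) : Prop :=
  ∀ g : Raag Γ, ∀ F ∈ periph Γ B, δ (translateFam g F) = δ F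

/-- A decoration-preserving based relative quasi-isometry
`(A(Γ), 𝒫_{BΓ}, δΓ, l) → (A(Λ), 𝒫_{BΛ}, δΛ, l')`. -/
def IsDecorBasedRelQI {V W : Type} (Γ : SimpleGraph V) (Λ : SimpleGraph W)
    (BΓ : Set V) (BΛ : Set W) {O : Type}
    (δΓ : Set (Set (Raag Γ)) → O) (δΛ : Set (Set (Raag Λ)) → O)
    (l : StdGeod Γ) (l' : StdGeod Λ)
    (f : Raag Γ → Raag Λ) (fs : Set (Set (Raag Γ)) → Set (Set (Raag Λ))) : Prop :=
  (∃ K A : ℝ, IsRelQIWith K A (raagDist Γ) (raagDist Λ) (periph Γ BΓ) (periph Λ BΛ) f fs) ∧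
  (∀ F ∈ periph Γ BΓ, δΛ (fs F) = δΓ F) ∧
  FinHaus (raagDist Λ) (f '' l.carrier) l'.carrier

/-- `A(Γ)` is a dovetail RAAG. -/
def Dovetail {V : Type} (Γ : SimpleGraph V) : Prop :=
  ∀ (W : Type) [Fintype W] (Λ : SimpleGraph W) (BΓ : Set V) (BΛ : Set W)
    (O : Type) (δΓ : Set (Set (Raag Γ)) → O) (δΛ : Set (Set (Raag Λ)) → O),
    DecorInvariant Γ BΓ δΓ → DecorInvariant Λ BΛ δΛ →
    ∀ (l : StdGeod Γ) (l' : StdGeod Λ) (f : Raag Γ → Raag Λ)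
      (fs : Set (Set (Raag Γ)) → Set (Set (Raag Λ))),
      IsDecorBasedRelQI Γ Λ BΓ BΛ δΓ δΛ l l' f fs →
      ∀ lam : Set (Set (Raag Γ)) → ℚ,
        (∀ F ∈ periph Γ BΓ, 0 < lam F) →
        (∃ M : ℚ, 1 ≤ M ∧ ∀ F ∈ periph Γ BΓ, 1 / M ≤ lam F ∧ lam F ≤ M) →
        (∀ F ∈ periph Γ BΓ, ∀ F' ∈ periph Γ BΓ, δΓ F = δΓ F' → lam F = lam F') →
        ∃ C : ℝ, 0 ≤ C ∧
          ∃ (g : Raag Γ → Raag Λ) (gs : Set (Set (Raag Γ)) → Set (Set (Raag Λ))),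
            IsDecorBasedRelQI Γ Λ BΓ BΛ δΓ δΛ l l' g gs ∧
            (∀ l2 : StdGeod Γ, l2.label ∈ BΓ → ¬ IsRGeod l2 →
              ∀ l3 : StdGeod Λ, FinHaus (raagDist Λ) (g '' l2.carrier) l3.carrier →
                StrWith g l2 l3 C (lam (parClass l2))) ∧
            (∀ l2 : StdGeod Γ, l2.label ∈ BΓ → IsRGeod l2 →
              ∀ l3 : StdGeod Λ, FinHaus (raagDist Λ) (g '' l2.carrier) l3.carrier →
                ∃ r : ℚ, StrWith g l2 l3 C r)

/-- The closed star of a vertex, as a vertex set. -/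
def starSet {V : Type} (Γ : SimpleGraph V) (x : V) : Set V :=
  insert x {u | Γ.Adj x u}

/-- The link of a vertex, as a vertex set. -/
def lkSet {V : Type} (Γ : SimpleGraph V) (x : V) : Set V := {u | Γ.Adj x u}

/-- The link of `x` inside the induced subgraph on `S`. -/
def lkIn {V : Type} (Γ : SimpleGraph V) (S : Set V) (x : V) : Set V :=
  {u | u ∈ S ∧ Γ.Adj x u}

/-- `x` is a cut vertex: deleting it (and incident edges) disconnects the graph. -/
def CutVertex {V : Type} (Γ : SimpleGraph V) (x : V) : Prop :=
  ¬ (Γ.induce {u : V | u ≠ x}).Preconnected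

/-- The vertex set `S` spans a biconnected subgraph: connected with no cut vertex. -/
def Biconn {V : Type} (Γ : SimpleGraph V) (S : Set V) : Prop :=
  (Γ.induce S).Connected ∧ ∀ x ∈ S, (Γ.induce (S \ {x})).Preconnected

/-- `S` spans a maximal biconnected subgraph. -/
def MaxBiconn {V : Type} (Γ : SimpleGraph V) (S : Set V) : Prop :=
  Biconn Γ S ∧ ∀ T : Set V, Biconn Γ T → S ⊆ T → S = T

/-- The collection `C₁` of maximal biconnected subgraphs: those containing at least
two cut vertices, or not contained in the star of any cut vertex. -/
def C1 {V : Type} (Γ : SimpleGraph V) : Set (Set V) :=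
  {S | MaxBiconn Γ S ∧
    ((∃ x ∈ S, ∃ y ∈ S, x ≠ y ∧ CutVertex Γ x ∧ CutVertex Γ y) ∨
     (∀ x : V, CutVertex Γ x → ¬ S ⊆ starSet Γ x))}

/-- `Γ` is an `n`-clique tree-graded graph. -/
def NCliqueTreeGraded {V : Type} (Γ : SimpleGraph V) (n : ℕ) : Prop :=
  Γ.Connected ∧
  (∀ x : V, CutVertex Γ x ∨ (∃! u : V, Γ.Adj x u)) ∧
  (∃ x y : V, 3 ≤ Γ.dist x y) ∧
  (∀ S : Set V, MaxBiconn Γ S →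
    ((Γ.IsClique S ∧ S.ncard = n ∧ ∀ x ∈ S, CutVertex Γ x) ∨
     (Γ.IsClique S ∧ S.ncard = 2 ∧ ∃! x : V, x ∈ S ∧ CutVertex Γ x)))

/-- The subgroup of `Raag Γ` generated by the vertices in `T`. -/
def subRaag {V : Type} (Γ : SimpleGraph V) (T : Set V) : Subgroup (Raag Γ) :=
  Subgroup.closure (raagGen Γ '' T)

/-- The word metric on the subgroup generated by `T`, w.r.t. the generators from `T`. -/
def subDist {V : Type} (Γ : SimpleGraph V) (T : Set V) :
    ↥(subRaag Γ T) → ↥(subRaag Γ T) → ℝ :=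
  wordDist {x : ↥(subRaag Γ T) | ∃ u ∈ T, (x : Raag Γ) = raagGen Γ u}

/-- The cylinder group `A(star(x))`. -/
def cylGroup {V : Type} (Γ : SimpleGraph V) (x : V) : Subgroup (Raag Γ) :=
  subRaag Γ (starSet Γ x)

/-- The word metric on the cylinder `A(star(x))` w.r.t. the vertices of `star(x)`. -/
def cylDist {V : Type} (Γ : SimpleGraph V) (x : V) :
    ↥(cylGroup Γ x) → ↥(cylGroup Γ x) → ℝ :=
  subDist Γ (starSet Γ x)

/-- The coset `a⟨x⟩`, as a subset of the cylinder `A(star(x))`. -/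
def cylCoset {V : Type} (Γ : SimpleGraph V) (x : V) (a : Raag Γ) :
    Set ↥(cylGroup Γ x) :=
  {g | ∃ n : ℤ, (g : Raag Γ) = a * raagGen Γ x ^ n}

/-- The peripheral structure `𝒫_x` on the cylinder `A(star(x))`: one element for each
coset `g·A(star_{Γ'}(x))` with `Γ' ∈ C₁` containing `x`, namely the family of cosets
`{g·h·⟨x⟩ : h ∈ A(lk_{Γ'}(x))}`. -/
def cylPeriph {V : Type} (Γ : SimpleGraph V) (x : V) :
    Set (Set (Set ↥(cylGroup Γ x))) :=
  {F | ∃ S ∈ C1 Γ, x ∈ S ∧ ∃ g : Raag Γ, g ∈ cylGroup Γ x ∧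
    F = {c | ∃ h ∈ subRaag Γ (lkIn Γ S x), c = cylCoset Γ x (g * h)}}

/-- The factors `A(T) ≤ A(Γ)` and `A(T') ≤ A(Λ)` are quasi-isometric. -/
def FactorQI {V W : Type} (Γ : SimpleGraph V) (Λ : SimpleGraph W)
    (T : Set V) (T' : Set W) : Prop :=
  ∃ φ : ↥(subRaag Γ T) → ↥(subRaag Λ T'), IsQI (subDist Γ T) (subDist Λ T') φ

/-!
A based quasi-isometry `(A(Γ), l) → (A(Λ), l')` has a based quasi-inverse, so it suffices to push
the `𝓡`-property forward along a based quasi-isometry `f`. For based quasi-isometries `g, g'`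
out of `(A(Λ), l')`, the composites `g ∘ f` and `g' ∘ f` have a common stretch factor `r`, and `f`
itself has a stretch factor `s`, non-zero because `f` is a quasi-isometry and `l` is unbounded.
Stretch factors multiply under composition, so `g` and `g'` both have stretch factor `r / s`.
Dividing is easy once a stretch factor is recorded as coarse tracking of a real affine map
`n ↦ a n + β`, where no integer rounding intervenes.
-/

section WordMetric

variable {G : Type*} [Group G] {S : Set G}

lemma wordDist_le_length {g h : G} {w : List G} (hw : ∀ x ∈ w, x ∈ S ∨ x⁻¹ ∈ S)
    (hgh : g * w.prod = h) : wordDist S g h ≤ w.length :=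
  csInf_le ⟨0, by rintro _ ⟨_, _, rfl⟩; positivity⟩ ⟨w, ⟨hw, hgh⟩, rfl⟩

lemma wordDist_nonneg (g h : G) : 0 ≤ wordDist S g h :=
  Real.sInf_nonneg (by rintro _ ⟨_, _, rfl⟩; positivity)

lemma exists_word_of_closure_eq_top (hS : Subgroup.closure S = ⊤) (g : G) :
    ∃ w : List G, (∀ x ∈ w, x ∈ S ∨ x⁻¹ ∈ S) ∧ w.prod = g := by
  have hg : g ∈ (Subgroup.closure S).toSubmonoid := by rw [hS]; trivial
  rw [Subgroup.closure_toSubmonoid] at hg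
  obtain ⟨w, hw, rfl⟩ := Submonoid.exists_list_of_mem_closure hg
  exact ⟨w, fun x hx => (hw x hx).imp id Set.mem_inv.mp, rfl⟩

lemma exists_wordDist_eq_length (hS : Subgroup.closure S = ⊤) (g h : G) :
    ∃ w : List G, (∀ x ∈ w, x ∈ S ∨ x⁻¹ ∈ S) ∧ g * w.prod = h ∧
      wordDist S g h = w.length := by
  set words := {w : List G | (∀ x ∈ w, x ∈ S ∨ x⁻¹ ∈ S) ∧ g * w.prod = h}
  have hne : (List.length '' words).Nonempty := by
    obtain ⟨w, hw, hprod⟩ := exists_word_of_closure_eq_top hS (g⁻¹ * h)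
    exact ⟨_, w, ⟨hw, by rw [hprod, mul_inv_cancel_left]⟩, rfl⟩
  obtain ⟨w, hw, hlen⟩ := Nat.sInf_mem hne
  refine ⟨w, hw.1, hw.2, IsLeast.csInf_eq ⟨⟨w, hw, rfl⟩, ?_⟩⟩
  rintro _ ⟨w', hw', rfl⟩
  have : w.length ≤ w'.length := hlen ▸ Nat.sInf_le ⟨w', hw', rfl⟩
  exact Nat.cast_le.mpr this

lemma wordDist_comm (hS : Subgroup.closure S = ⊤) (g h : G) :
    wordDist S g h = wordDist S h g := by
  suffices key : ∀ g h : G, wordDist S h g ≤ wordDist S g h from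
    le_antisymm (key h g) (key g h)
  intro g h
  obtain ⟨w, hw, hprod, hlen⟩ := exists_wordDist_eq_length hS g h
  rw [hlen, ← List.length_map (f := (·⁻¹)), ← List.length_reverse]
  refine wordDist_le_length (fun x hx => ?_) ?_
  · obtain ⟨y, hy, rfl⟩ := List.mem_map.mp (List.mem_reverse.mp hx)
    rw [inv_inv]
    exact (hw y hy).symm
  · rw [← List.prod_inv_reverse, ← hprod, mul_inv_cancel_right]

lemma wordDist_triangle (hS : Subgroup.closure S = ⊤) (g h k : G) :
    wordDist S g k ≤ wordDist S g h + wordDist S h k := by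
  obtain ⟨w₁, hw₁, hprod₁, hlen₁⟩ := exists_wordDist_eq_length hS g h
  obtain ⟨w₂, hw₂, hprod₂, hlen₂⟩ := exists_wordDist_eq_length hS h k
  rw [hlen₁, hlen₂, ← Nat.cast_add, ← List.length_append]
  refine wordDist_le_length (fun x hx => ?_) ?_
  · exact (List.mem_append.mp hx).elim (hw₁ x) (hw₂ x)
  · rw [List.prod_append, ← mul_assoc, hprod₁, hprod₂]

abbrev wordPseudoMetricSpace (hS : Subgroup.closure S = ⊤) : PseudoMetricSpace G where
  dist := wordDist S
  dist_self g := le_antisymm ((wordDist_le_length (w := []) (by simp) (by simp)).trans_eq (by simp))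
    (wordDist_nonneg g g)
  dist_comm := wordDist_comm hS
  dist_triangle := wordDist_triangle hS

lemma wordDist_mul_zpow_le {s : G} (hs : s ∈ S) (g : G) (k : ℤ) :
    wordDist S g (g * s ^ k) ≤ |(k : ℝ)| := by
  obtain ⟨n, rfl | rfl⟩ := k.eq_nat_or_neg
  · refine (wordDist_le_length (w := List.replicate n s) ?_ ?_).trans_eq ?_ <;> simp [hs]
  · refine (wordDist_le_length (w := List.replicate n s⁻¹) ?_ ?_).trans_eq ?_ <;> simp [hs]

lemma abs_toAdd_le_wordDist (hS : Subgroup.closure S = ⊤) (φ : G →* Multiplicative ℤ)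
    (hφ : ∀ s ∈ S, |(φ s).toAdd| ≤ 1) (g h : G) :
    |((φ (g⁻¹ * h)).toAdd : ℝ)| ≤ wordDist S g h := by
  obtain ⟨w, hw, hprod, hlen⟩ := exists_wordDist_eq_length hS g h
  rw [hlen, ← eq_inv_mul_iff_mul_eq.mpr hprod]
  suffices |(φ w.prod).toAdd| ≤ w.length by exact_mod_cast this
  clear hprod hlen
  induction w with
  | nil => simp
  | cons x w ih =>
    have hx : |(φ x).toAdd| ≤ 1 := by
      rcases hw x List.mem_cons_self with hx | hx
      · exact hφ x hx
      · simpa using hφ _ hx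
    rw [List.prod_cons, map_mul, toAdd_mul, List.length_cons, Nat.cast_succ, add_comm _ 1]
    exact (abs_add_le _ _).trans
      (add_le_add hx (ih fun y hy => hw y (List.mem_cons_of_mem x hy)))

end WordMetric

section RaagMetric

variable {V : Type} {Γ : SimpleGraph V}

-- Its `dist` unfolds to `raagDist Γ`, so the metric lemmas below apply to the notions on `A(Γ)`.
instance : PseudoMetricSpace (Raag Γ) :=
  wordPseudoMetricSpace (PresentedGroup.closure_range_of (raagRels Γ))

open scoped Classical in
def exponentSum (Γ : SimpleGraph V) (v : V) : Raag Γ →* Multiplicative ℤ :=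
  PresentedGroup.toGroup (f := fun u => Multiplicative.ofAdd (if u = v then 1 else 0)) (by
    rintro _ ⟨x, y, -, rfl⟩
    simp only [map_mul, map_inv, FreeGroup.lift_apply_of]
    exact mul_inv_eq_one.mpr (by rw [mul_inv_eq_iff_eq_mul, mul_comm]))

lemma exponentSum_raagGen_self (v : V) :
    exponentSum Γ v (raagGen Γ v) = Multiplicative.ofAdd 1 := by
  classical
  exact (PresentedGroup.toGroup.of _).trans (if_pos rfl)

lemma abs_toAdd_exponentSum_raagGen_le (v u : V) :
    |(exponentSum Γ v (raagGen Γ u)).toAdd| ≤ 1 := by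
  classical
  rw [exponentSum, raagGen, PresentedGroup.toGroup.of]
  split_ifs <;> simp

lemma dist_param (l : StdGeod Γ) (m n : ℤ) : dist (l.param m) (l.param n) = |(m : ℝ) - n| := by
  have hn : l.param n = l.param m * raagGen Γ l.label ^ (n - m) := by
    simp only [StdGeod.param, mul_assoc, ← zpow_add, add_sub_cancel]
  refine le_antisymm ?_ ?_
  · rw [hn, abs_sub_comm, ← Int.cast_sub]
    exact wordDist_mul_zpow_le (Set.mem_range_self l.label) _ _
  · have := abs_toAdd_le_wordDist (PresentedGroup.closure_range_of (raagRels Γ))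
      (exponentSum Γ l.label) (by rintro _ ⟨u, rfl⟩; exact abs_toAdd_exponentSum_raagGen_le _ u)
      (l.param m) (l.param n)
    rwa [hn, inv_mul_cancel_left, ← hn, map_zpow, exponentSum_raagGen_self, toAdd_zpow, toAdd_ofAdd,
      smul_eq_mul, mul_one, Int.cast_sub, abs_sub_comm] at this

lemma StdGeod.not_isBounded_range_param (l : StdGeod Γ) :
    ¬ Bornology.IsBounded (Set.range l.param) := by
  intro hbdd
  obtain ⟨C, hC⟩ := Metric.isBounded_iff.mp hbdd
  have := hC (Set.mem_range_self 0) (Set.mem_range_self (⌈C⌉ + 1))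
  rw [dist_param, abs_sub_comm] at this
  push_cast at this
  linarith [Int.le_ceil C, le_abs_self ((⌈C⌉ : ℝ) + 1 - 0)]

end RaagMetric

section QuasiIsometry

variable {X Y Z : Type*} [PseudoMetricSpace X] [PseudoMetricSpace Y] [PseudoMetricSpace Z]
  {K A : ℝ} {f : X → Y}

lemma IsQIWith.dist_le (hf : IsQIWith K A dist dist f) (x x' : X) :
    dist x x' ≤ K * (dist (f x) (f x') + A) := by
  obtain ⟨hK, -, hqi, -⟩ := hf
  rw [mul_comm, ← div_le_iff₀ (by linarith)]
  linarith [(hqi x x').1]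

lemma IsQIWith.coarseLipschitzWith (hf : IsQIWith K A dist dist f) :
    CoarseLipschitzWith K A dist dist f :=
  fun x x' => (hf.2.2.1 x x').2

lemma IsQIWith.of_dist_le (hK : 1 ≤ K) (hA : 0 ≤ A)
    (hlow : ∀ x x', dist x x' ≤ K * (dist (f x) (f x') + A))
    (hup : CoarseLipschitzWith K A dist dist f) (hcob : ∀ y, ∃ x, dist (f x) y ≤ A) :
    IsQIWith K A dist dist f := by
  refine ⟨hK, hA, fun x x' => ⟨?_, hup x x'⟩, hcob⟩
  rw [sub_le_iff_le_add, div_le_iff₀ (by linarith), mul_comm]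
  exact hlow x x'

lemma IsQIWith.comp {K' A' : ℝ} {g : Y → Z} (hf : IsQIWith K A dist dist f)
    (hg : IsQIWith K' A' dist dist g) :
    IsQIWith (K * K') (K' * A + 2 * A') dist dist (g ∘ f) := by
  have hf_le := hf.dist_le
  have hf_lip := hf.coarseLipschitzWith
  have hg_le := hg.dist_le
  have hg_lip := hg.coarseLipschitzWith
  obtain ⟨hK, hA, -, hcob⟩ := hf
  obtain ⟨hK', hA', -, hcob'⟩ := hg
  have hKK' : 1 ≤ K * K' := one_le_mul_of_one_le_of_one_le hK hK'
  refine .of_dist_le hKK' (by positivity) (fun x x' => ?_) (fun x x' => ?_) (fun z => ?_)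
  · have hKA : K * A ≤ K * K' * (K' * A) := by
      have : K * A * 1 ≤ K * A * (K' * K') :=
        mul_le_mul_of_nonneg_left (one_le_mul_of_one_le_of_one_le hK' hK') (by positivity)
      linarith
    calc dist x x' ≤ K * (dist (f x) (f x') + A) := hf_le x x'
      _ ≤ K * (K' * (dist (g (f x)) (g (f x')) + A') + A) := by gcongr; exact hg_le _ _
      _ ≤ K * K' * (dist (g (f x)) (g (f x')) + (K' * A + 2 * A')) := by
        nlinarith [mul_nonneg (by positivity : (0:ℝ) ≤ K * K') hA']
  · calc dist (g (f x)) (g (f x')) ≤ K' * dist (f x) (f x') + A' := hg_lip _ _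
      _ ≤ K' * (K * dist x x' + A) + A' := by gcongr; exact hf_lip _ _
      _ ≤ K * K' * dist x x' + (K' * A + 2 * A') := by nlinarith
  · obtain ⟨y, hy⟩ := hcob' z
    obtain ⟨x, hx⟩ := hcob y
    refine ⟨x, (dist_triangle _ (g y) z).trans ?_⟩
    have := hg_lip (f x) y
    simp only [Function.comp_apply]
    nlinarith

lemma IsQIWith.dist_rightInverse_le (hf : IsQIWith K A dist dist f) {fb : Y → X}
    (hfb : ∀ y, dist (f (fb y)) y ≤ A) (y : Y) (x : X) :
    dist (fb y) x ≤ K * (dist y (f x) + 2 * A) := by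
  have hK : 0 ≤ K := zero_le_one.trans hf.1
  calc dist (fb y) x ≤ K * (dist (f (fb y)) (f x) + A) := hf.dist_le _ _
    _ ≤ K * (dist y (f x) + 2 * A) := mul_le_mul_of_nonneg_left
      (by linarith [dist_triangle (f (fb y)) y (f x), hfb y]) hK

lemma IsQIWith.rightInverse (hf : IsQIWith K A dist dist f) {fb : Y → X}
    (hfb : ∀ y, dist (f (fb y)) y ≤ A) : IsQIWith K (3 * K * A) dist dist fb := by
  have hK : 1 ≤ K := hf.1
  have hA : 0 ≤ A := hf.2.1
  refine .of_dist_le hK (by positivity) (fun y y' => ?_) (fun y y' => ?_) (fun x => ⟨f x, ?_⟩)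
  · have h₁ : dist y y' ≤ K * dist (fb y) (fb y') + 3 * A := by
      linarith [dist_triangle4 y (f (fb y)) (f (fb y')) y', hf.coarseLipschitzWith (fb y) (fb y'),
        dist_comm y (f (fb y)), hfb y, hfb y']
    have h₂ : A ≤ K * K * A := le_mul_of_one_le_left hA (one_le_mul_of_one_le_of_one_le hK hK)
    nlinarith
  · have := hf.dist_rightInverse_le hfb y (fb y')
    nlinarith [dist_triangle y y' (f (fb y')), dist_comm y' (f (fb y')), hfb y']
  · have := hf.dist_rightInverse_le hfb (f x) x
    rw [dist_self] at this
    nlinarith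

lemma IsQIWith.finHaus_rightInverse_image (hf : IsQIWith K A dist dist f) {fb : Y → X}
    (hfb : ∀ y, dist (f (fb y)) y ≤ A) {S : Set X} {T : Set Y}
    (h : FinHaus dist (f '' S) T) : FinHaus dist (fb '' T) S := by
  have hK : 1 ≤ K := hf.1
  have hA : 0 ≤ A := hf.2.1
  obtain ⟨r, hr, h₁, h₂⟩ := h
  have key {x y} (hxy : dist (f x) y ≤ r) : dist (fb y) x ≤ K * (r + 2 * A) :=
    (hf.dist_rightInverse_le hfb y x).trans (by rw [dist_comm]; gcongr)
  refine ⟨K * (r + 2 * A), by positivity, ?_, fun x hx => ?_⟩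
  · rintro _ ⟨y, hy, rfl⟩
    obtain ⟨_, ⟨x, hx, rfl⟩, hxy⟩ := h₂ y hy
    exact ⟨x, hx, key hxy⟩
  · obtain ⟨y, hy, hxy⟩ := h₁ (f x) (Set.mem_image_of_mem f hx)
    exact ⟨fb y, Set.mem_image_of_mem fb hy, key hxy⟩

lemma FinHaus.trans {S T U : Set X} (h₁ : FinHaus dist S T) (h₂ : FinHaus dist T U) :
    FinHaus dist S U := by
  obtain ⟨r₁, hr₁, h₁S, h₁T⟩ := h₁
  obtain ⟨r₂, hr₂, h₂T, h₂U⟩ := h₂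
  refine ⟨r₁ + r₂, by positivity, fun s hs => ?_, fun u hu => ?_⟩
  · obtain ⟨t, ht, hst⟩ := h₁S s hs
    obtain ⟨u, hu, htu⟩ := h₂T t ht
    exact ⟨u, hu, (dist_triangle s t u).trans (add_le_add hst htu)⟩
  · obtain ⟨t, ht, htu⟩ := h₂U u hu
    obtain ⟨s, hs, hst⟩ := h₁T t ht
    exact ⟨s, hs, (dist_triangle s t u).trans (add_le_add hst htu)⟩

lemma FinHaus.image (hf : CoarseLipschitzWith K A dist dist f) (hK : 0 ≤ K) (hA : 0 ≤ A)
    {S T : Set X} (h : FinHaus dist S T) : FinHaus dist (f '' S) (f '' T) := by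
  obtain ⟨r, hr, hS, hT⟩ := h
  have key {x x'} (hxx' : dist x x' ≤ r) : dist (f x) (f x') ≤ K * r + A :=
    (hf x x').trans (by gcongr)
  refine ⟨K * r + A, by positivity, ?_, ?_⟩
  · rintro _ ⟨x, hx, rfl⟩
    obtain ⟨x', hx', hxx'⟩ := hS x hx
    exact ⟨f x', Set.mem_image_of_mem f hx', key hxx'⟩
  · rintro _ ⟨x', hx', rfl⟩
    obtain ⟨x, hx, hxx'⟩ := hT x' hx'
    exact ⟨f x, Set.mem_image_of_mem f hx, key hxx'⟩

lemma IsQIWith.isBounded_of_isBounded_image (hf : IsQIWith K A dist dist f) {S : Set X}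
    (h : Bornology.IsBounded (f '' S)) : Bornology.IsBounded S := by
  obtain ⟨C, hC⟩ := Metric.isBounded_iff.mp h
  refine Metric.isBounded_iff.mpr ⟨K * (C + A), fun x hx x' hx' => (hf.dist_le x x').trans ?_⟩
  have hK : 0 ≤ K := zero_le_one.trans hf.1
  gcongr
  exact hC (Set.mem_image_of_mem f hx) (Set.mem_image_of_mem f hx')

end QuasiIsometry

section BasedQI

variable {V₁ V₂ V₃ : Type} {Γ₁ : SimpleGraph V₁} {Γ₂ : SimpleGraph V₂} {Γ₃ : SimpleGraph V₃}
  {l₁ : StdGeod Γ₁} {l₂ : StdGeod Γ₂} {l₃ : StdGeod Γ₃}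

lemma IsBasedQI.comp {f : Raag Γ₁ → Raag Γ₂} {g : Raag Γ₂ → Raag Γ₃}
    (hf : IsBasedQI f l₁ l₂) (hg : IsBasedQI g l₂ l₃) : IsBasedQI (g ∘ f) l₁ l₃ := by
  obtain ⟨⟨K, A, hfK⟩, hfl⟩ := hf
  obtain ⟨⟨K', A', hgK⟩, hgl⟩ := hg
  refine ⟨⟨_, _, hfK.comp hgK⟩, ?_⟩
  rw [Set.image_comp]
  exact (hfl.image hgK.coarseLipschitzWith (zero_le_one.trans hgK.1) hgK.2.1).trans hgl

lemma IsBasedQI.exists_inverse {f : Raag Γ₁ → Raag Γ₂} (hf : IsBasedQI f l₁ l₂) :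
    ∃ fb : Raag Γ₂ → Raag Γ₁, IsBasedQI fb l₂ l₁ := by
  obtain ⟨⟨K, A, hfK⟩, hfl⟩ := hf
  choose fb hfb using hfK.2.2.2
  exact ⟨fb, ⟨_, _, hfK.rightInverse hfb⟩, hfK.finHaus_rightInverse_image hfb hfl⟩

end BasedQI

lemma abs_floor_sub_le {α : Type*} [Ring α] [LinearOrder α] [IsStrictOrderedRing α] [FloorRing α]
    (x : α) : |(⌊x⌋ : α) - x| ≤ 1 := by
  rw [abs_sub_comm, Int.self_sub_floor, Int.abs_fract]
  exact (Int.fract_lt_one x).le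

section TracksAffine

variable {Y Z : Type*} [PseudoMetricSpace Y] [PseudoMetricSpace Z]

/-- `u` is coarsely `γ ∘ (n ↦ a n + β)`, phrased without rounding `a n + β` to an integer. -/
def TracksAffine (γ u : ℤ → Y) (a β : ℝ) : Prop :=
  ∃ C : ℝ, ∀ n k : ℤ, dist (u n) (γ k) ≤ C + |k - (a * n + β)|

lemma TracksAffine.isBounded_range {γ u : ℤ → Y} {β : ℝ} (h : TracksAffine γ u 0 β) :
    Bornology.IsBounded (Set.range u) := by
  obtain ⟨C, hC⟩ := h
  refine (Metric.isBounded_closedBall (x := γ ⌊β⌋) (r := C + 1)).subset ?_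
  rintro _ ⟨n, rfl⟩
  have := abs_floor_sub_le β
  rw [Metric.mem_closedBall]
  linarith [hC n ⌊β⌋, show |(⌊β⌋ : ℝ) - (0 * n + β)| = |(⌊β⌋ : ℝ) - β| by ring_nf]

lemma TracksAffine.of_comp {γ₂ u : ℤ → Y} {γ₃ : ℤ → Z} {G : Y → Z} {K A a c β δ : ℝ}
    (hG : CoarseLipschitzWith K A dist dist G) (hK : 0 ≤ K) (ha : a ≠ 0)
    (hu : TracksAffine γ₂ u a β) (hGu : TracksAffine γ₃ (G ∘ u) c δ) :
    TracksAffine γ₃ (G ∘ γ₂) (c / a) (δ - c / a * β) := by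
  obtain ⟨C₁, hC₁⟩ := hu
  obtain ⟨C₂, hC₂⟩ := hGu
  refine ⟨K * (C₁ + |a|) + A + C₂ + |c|, fun m k => ?_⟩
  -- `u n` lies near `γ₂ m`, where `n` is the integer part of the preimage `t` of `m`
  set t : ℝ := (m - β) / a
  set n : ℤ := ⌊t⌋
  have hn : 0 ≤ t - n ∧ t - n ≤ 1 :=
    ⟨by linarith [Int.floor_le t], by linarith [Int.lt_floor_add_one t]⟩
  have hm : (m : ℝ) = a * t + β := by simp only [t]; field_simp; ring
  have h₁ : dist (γ₂ m) (u n) ≤ C₁ + |a| := by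
    rw [dist_comm]
    refine (hC₁ n m).trans (add_le_add le_rfl ?_)
    rw [hm, show a * t + β - (a * n + β) = a * (t - n) by ring, abs_mul, abs_of_nonneg hn.1]
    exact mul_le_of_le_one_right (abs_nonneg a) hn.2
  have h₂ : dist (G (u n)) (γ₃ k) ≤ C₂ + |c| + |k - (c / a * m + (δ - c / a * β))| := by
    refine (hC₂ n k).trans ?_
    have hct : c / a * m + (δ - c / a * β) = c * t + δ := by rw [hm]; field_simp; ring
    rw [hct, show (k : ℝ) - (c * n + δ) = (k - (c * t + δ)) + c * (t - n) by ring]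
    have := abs_add_le ((k : ℝ) - (c * t + δ)) (c * (t - n))
    rw [abs_mul, abs_of_nonneg hn.1] at this
    nlinarith [abs_nonneg c]
  calc dist (G (γ₂ m)) (γ₃ k) ≤ dist (G (γ₂ m)) (G (u n)) + dist (G (u n)) (γ₃ k) :=
        dist_triangle _ _ _
    _ ≤ (K * (C₁ + |a|) + A) + (C₂ + |c| + |k - (c / a * m + (δ - c / a * β))|) := by
        gcongr
        exact (hG _ _).trans (by gcongr)
    _ = _ := by ring

end TracksAffine

section StretchFactor

variable {V₁ V₂ V₃ : Type} {Γ₁ : SimpleGraph V₁} {Γ₂ : SimpleGraph V₂} {Γ₃ : SimpleGraph V₃}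
  {l₁ : StdGeod Γ₁} {l₂ : StdGeod Γ₂} {l₃ : StdGeod Γ₃}

lemma hasStr_iff_tracksAffine {f : Raag Γ₁ → Raag Γ₂} {r : ℚ} :
    HasStr f l₁ l₂ r ↔ ∃ ε : ℤ, (ε = 1 ∨ ε = -1) ∧
      ∃ β : ℝ, TracksAffine l₂.param (f ∘ l₁.param) (ε * r) β := by
  have hround {ε : ℤ} (hε : ε = 1 ∨ ε = -1) (n : ℤ) :
      |(ε : ℝ) * ⌊r * n⌋ - ε * r * n| ≤ 1 := by
    have : |((⌊r * n⌋ : ℤ) : ℝ) - r * n| ≤ 1 := by exact_mod_cast abs_floor_sub_le (r * n)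
    rcases hε with rfl | rfl
    · simpa using this
    · rw [← abs_neg]; convert this using 2; push_cast; ring
  constructor
  · rintro ⟨C, -, ε, hε, b, hb⟩
    refine ⟨ε, hε, b, C + 1, fun n k => ?_⟩
    have hk : |((ε * ⌊r * n⌋ + b : ℤ) : ℝ) - k| ≤ 1 + |(k : ℝ) - (ε * r * n + b)| := by
      refine (abs_sub_le _ ((ε : ℝ) * r * n + b) _).trans ?_
      rw [abs_sub_comm _ (k : ℝ)]
      push_cast
      rw [show (ε : ℝ) * ⌊r * n⌋ + b - (ε * r * n + b) = ε * ⌊r * n⌋ - ε * r * n by ring]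
      linarith [hround hε n]
    calc dist (f (l₁.param n)) (l₂.param k)
        ≤ dist (f (l₁.param n)) (l₂.param (ε * ⌊r * n⌋ + b)) +
          dist (l₂.param (ε * ⌊r * n⌋ + b)) (l₂.param k) := dist_triangle _ _ _
      _ ≤ C + (1 + |(k : ℝ) - (ε * r * n + b)|) := by
        rw [dist_param]
        exact add_le_add (hb n) hk
      _ = C + 1 + |(k : ℝ) - (ε * r * n + b)| := by ring
  · rintro ⟨ε, hε, β, C, hC⟩
    refine ⟨max C 0 + 2, by positivity, ε, hε, ⌊β⌋, fun n => (hC n _).trans ?_⟩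
    have := abs_add_le ((ε : ℝ) * ⌊r * n⌋ - ε * r * n) ((⌊β⌋ : ℝ) - β)
    push_cast
    rw [show (ε : ℝ) * ⌊r * n⌋ + ⌊β⌋ - (ε * r * n + β) =
      (ε * ⌊r * n⌋ - ε * r * n) + (⌊β⌋ - β) by ring]
    linarith [le_max_left C 0, hround hε n, abs_floor_sub_le β]

lemma HasStr.ne_zero {f : Raag Γ₁ → Raag Γ₂} {s : ℚ} (hf : IsQI dist dist f)
    (h : HasStr f l₁ l₂ s) : s ≠ 0 := by
  rintro rfl
  obtain ⟨K, A, hfK⟩ := hf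
  obtain ⟨ε, -, β, hβ⟩ := hasStr_iff_tracksAffine.mp h
  rw [Rat.cast_zero, mul_zero] at hβ
  refine l₁.not_isBounded_range_param (hfK.isBounded_of_isBounded_image ?_)
  rw [← Set.range_comp]
  exact hβ.isBounded_range

lemma HasStr.of_comp {F : Raag Γ₁ → Raag Γ₂} {G : Raag Γ₂ → Raag Γ₃} {K A : ℝ} {r s : ℚ}
    (hG : CoarseLipschitzWith K A dist dist G) (hK : 0 ≤ K) (hs : s ≠ 0)
    (hF : HasStr F l₁ l₂ s) (hGF : HasStr (G ∘ F) l₁ l₃ r) : HasStr G l₂ l₃ (r / s) := by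
  obtain ⟨ε₁, hε₁, β₁, h₁⟩ := hasStr_iff_tracksAffine.mp hF
  obtain ⟨ε₂, hε₂, β₂, h₂⟩ := hasStr_iff_tracksAffine.mp hGF
  have hs' : (s : ℝ) ≠ 0 := Rat.cast_ne_zero.mpr hs
  have hslope : (ε₂ * r : ℝ) / (ε₁ * s) = ((ε₁ * ε₂ : ℤ) : ℝ) * ((r / s : ℚ) : ℝ) := by
    push_cast
    rcases hε₁ with rfl | rfl <;> field_simp <;> ring
  refine hasStr_iff_tracksAffine.mpr ⟨ε₁ * ε₂, ?_, _, hslope ▸ h₁.of_comp hG hK ?_ h₂⟩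
  · rcases hε₁ with rfl | rfl <;> rcases hε₂ with rfl | rfl <;> norm_num
  · rcases hε₁ with rfl | rfl <;> simpa using hs'

lemma IsRGeod.of_isBasedQI [Fintype V₂] {f : Raag Γ₁ → Raag Γ₂} (hf : IsBasedQI f l₁ l₂)
    (h : IsRGeod l₁) : IsRGeod l₂ := by
  intro W _ Λ l' g g' hg hg'
  obtain ⟨s, hs, -⟩ := h V₂ Γ₂ l₂ f f hf hf
  have transfer {g : Raag Γ₂ → Raag Λ} (hg : IsBasedQI g l₂ l') {r : ℚ}
      (hr : HasStr (g ∘ f) l₁ l' r) : HasStr g l₂ l' (r / s) := by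
    obtain ⟨K, A, hgK⟩ := hg.1
    exact .of_comp hgK.coarseLipschitzWith (zero_le_one.trans hgK.1) (hs.ne_zero hf.1) hs hr
  obtain ⟨r, hr, hr'⟩ := h W Λ l' _ _ (hf.comp hg) (hf.comp hg')
  exact ⟨r / s, transfer hg hr, transfer hg' hr'⟩

end StretchFactor

/-- If there is a based quasi-isometry `(A(Γ), l) → (A(Λ), l')`,
then `l'` is an `𝓡`-geodesic if and only if `l` is. -/
theorem stmt7 {V W : Type} [Fintype V] [Fintype W]
    (Γ : SimpleGraph V) (Λ : SimpleGraph W)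
    (l : StdGeod Γ) (l' : StdGeod Λ) (f : Raag Γ → Raag Λ)
    (hf : IsBasedQI f l l') :
    (IsRGeod l' ↔ IsRGeod l) := by
  obtain ⟨fb, hfb⟩ := hf.exists_inverse
  exact ⟨IsRGeod.of_isBasedQI hfb, IsRGeod.of_isBasedQI hf⟩

end
end

section
/- Let Y and Y' be metric spaces, let K ≥ 1, A ≥ 0, and let B be a nonzero real number. Suppose γ : Y → ℝ and ψ : Y → Y' are maps such that φ : ℝ × Y → ℝ × Y' defined by φ(t,y) = (B·t + γ(y), ψ(y)) is a (K,A)-quasi-isometry. Then ψ : Y → Y' is a (K',A')-quasi-isometry and γ : Y → ℝ is (K',A')-coarse Lipschitz, where K' and A' depend only on K and A. -/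
/-!
Comparing `φ (0, y)` with `φ (0, y')` bounds both `|γ y - γ y'|` and `d (ψ y) (ψ y')` by
`K d(y, y') + A`. For the lower bound on `ψ`, lift `y` to height `t = (γ y' - γ y) / B`: then
`φ (t, y)` and `φ (0, y')` share their `ℝ`-coordinate, so their distance is exactly
`d (ψ y) (ψ y')`, while `d ((t, y), (0, y')) ≥ d (y, y')`.
-/

noncomputable section

universe u v

/-- The `ℓ²`-product distance on `ℝ × X`. -/
def prodDist {X : Type*} (d : X → X → ℝ) : (ℝ × X) → (ℝ × X) → ℝ :=
  fun p q => Real.sqrt (|p.1 - q.1| ^ 2 + d p.2 q.2 ^ 2)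

section prodDist

variable {X : Type*} [PseudoMetricSpace X]

lemma abs_fst_sub_le_prodDist (p q : ℝ × X) :
    |p.1 - q.1| ≤ prodDist (fun a b : X => dist a b) p q :=
  Real.abs_le_sqrt ((sq_abs _).symm.trans_le (le_add_of_nonneg_right (sq_nonneg _)))

lemma dist_snd_le_prodDist (p q : ℝ × X) :
    dist p.2 q.2 ≤ prodDist (fun a b : X => dist a b) p q :=
  Real.le_sqrt_of_sq_le (le_add_of_nonneg_left (sq_nonneg _))

lemma prodDist_of_fst_eq {s t : ℝ} (h : s = t) (x x' : X) :
    prodDist (fun a b : X => dist a b) (s, x) (t, x') = dist x x' := by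
  simp [prodDist, h, Real.sqrt_sq dist_nonneg]

end prodDist

section SkewProduct

variable {Y Y' : Type*} [PseudoMetricSpace Y] [PseudoMetricSpace Y'] {K A B : ℝ}
  {γ : Y → ℝ} {ψ : Y → Y'}

lemma prodDist_skewProduct_le
    (hφ : IsQIWith K A (prodDist fun a b : Y => dist a b) (prodDist fun a b : Y' => dist a b)
      (fun p : ℝ × Y => (B * p.1 + γ p.2, ψ p.2)))
    (y y' : Y) :
    prodDist (fun a b : Y' => dist a b) (γ y, ψ y) (γ y', ψ y') ≤ K * dist y y' + A := by
  have h := (hφ.2.2.1 (0, y) (0, y')).2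
  beta_reduce at h
  rwa [prodDist_of_fst_eq rfl, mul_zero, zero_add, zero_add] at h

theorem CoarseLipschitzWith.of_isQIWith_skewProduct
    (hφ : IsQIWith K A (prodDist fun a b : Y => dist a b) (prodDist fun a b : Y' => dist a b)
      (fun p : ℝ × Y => (B * p.1 + γ p.2, ψ p.2))) :
    CoarseLipschitzWith K A (fun a b : Y => dist a b) (fun a b : ℝ => dist a b) γ := fun y y' =>
  calc dist (γ y) (γ y') = |γ y - γ y'| := Real.dist_eq _ _
    _ ≤ K * dist y y' + A :=
      (abs_fst_sub_le_prodDist (γ y, ψ y) (γ y', ψ y')).trans (prodDist_skewProduct_le hφ y y')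

theorem IsQIWith.of_isQIWith_skewProduct (hB : B ≠ 0)
    (hφ : IsQIWith K A (prodDist fun a b : Y => dist a b) (prodDist fun a b : Y' => dist a b)
      (fun p : ℝ × Y => (B * p.1 + γ p.2, ψ p.2))) :
    IsQIWith K A (fun a b : Y => dist a b) (fun a b : Y' => dist a b) ψ := by
  refine ⟨hφ.1, hφ.2.1, fun y y' => ⟨?_, ?_⟩, fun y' => ?_⟩
  · set t := (γ y' - γ y) / B
    have hcancel : B * t + γ y = B * 0 + γ y' := by
      rw [mul_div_cancel₀ _ hB]; ring
    have h := (hφ.2.2.1 (t, y) (0, y')).1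
    beta_reduce at h
    rw [prodDist_of_fst_eq hcancel] at h
    have hdist : dist y y' / K ≤ prodDist (fun a b : Y => dist a b) (t, y) (0, y') / K :=
      div_le_div_of_nonneg_right (dist_snd_le_prodDist (t, y) (0, y')) (by linarith [hφ.1])
    linarith
  · exact (dist_snd_le_prodDist (γ y, ψ y) (γ y', ψ y')).trans (prodDist_skewProduct_le hφ y y')
  · obtain ⟨⟨t, y⟩, h⟩ := hφ.2.2.2 (0, y')
    exact ⟨y, (dist_snd_le_prodDist _ (0, y')).trans h⟩

end SkewProduct

/-- If `(t, y) ↦ (B t + γ y, ψ y)` is a `(K, A)`-quasi-isometry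
`ℝ × Y → ℝ × Y'` with `B ≠ 0`, then `ψ` is a `(K', A')`-quasi-isometry and `γ` is
`(K', A')`-coarse Lipschitz, with `K'`, `A'` depending only on `K` and `A`. -/
theorem stmt17 (K A : ℝ) (hK : 1 ≤ K) (hA : 0 ≤ A) :
    ∃ K' A' : ℝ, 1 ≤ K' ∧ 0 ≤ A' ∧
      ∀ (Y : Type u) (Y' : Type v) [MetricSpace Y] [MetricSpace Y'] (B : ℝ), B ≠ 0 →
        ∀ (γ : Y → ℝ) (ψ : Y → Y'),
          IsQIWith K A (prodDist fun a b : Y => dist a b)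
            (prodDist fun a b : Y' => dist a b)
            (fun p : ℝ × Y => (B * p.1 + γ p.2, ψ p.2)) →
          (IsQIWith K' A' (fun a b : Y => dist a b) (fun a b : Y' => dist a b) ψ ∧
           CoarseLipschitzWith K' A' (fun a b : Y => dist a b)
             (fun a b : ℝ => dist a b) γ) :=
  ⟨K, A, hK, hA, fun _ _ _ _ _ hB _ _ hφ =>
    ⟨IsQIWith.of_isQIWith_skewProduct hB hφ, CoarseLipschitzWith.of_isQIWith_skewProduct hφ⟩⟩

end
end

section
/- Let Γ and Λ be complete graphs on n and m vertices respectively (so A(Γ) ≅ ℤⁿ and A(Λ) ≅ ℤᵐ are free abelian). Let 𝒪 be a set of ornaments, let B_Γ ⊆ VΓ, B_Λ ⊆ VΛ, let δ̂_Γ : B_Γ → 𝒪 and δ̂_Λ : B_Λ → 𝒪 be maps with induced decorations δ_Γ and δ_Λ, and let v ∈ B_Γ and w ∈ B_Λ with l_v = ⟨v⟩ and l_w = ⟨w⟩ the corresponding standard geodesics. Then there exists a decoration-preserving based relative quasi-isometry (A(Γ), 𝒫_{B_Γ}, δ_Γ, l_v) → (A(Λ), 𝒫_{B_Λ}, δ_Λ,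 l_w) if and only if n = m and there exists a bijection r : B_Γ → B_Λ with δ̂_Λ ∘ r = δ̂_Γ and r(v) = w. -/
noncomputable section

universe u v

/-!
For a complete graph on `V`, `A(Γ)` is the free abelian group `ℤ^V` and its word metric is the
`ℓ¹` metric, so a standard geodesic is an affine line `c + ℤ eᵤ` and two of them are parallel
exactly when they have the same direction `u`; hence `𝒫_B` is indexed by `B`.
A quasi-isometry `ℤ^n → ℤ^m` forces `n ≤ m` by counting lattice points: after rescaling so
that it becomes injective, it maps a box with `(2R+1)^n` points into a box with `O(R)^m` points.
The bijection `f_*` of peripheral structures is then a decoration-preserving bijection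
`B_Γ → B_Λ`, and it sends `v` to `w` because `f(l_v)` is close to both `l_w` and a geodesic
labelled by the image of `v`. Conversely, a decoration-preserving bijection `B_Γ → B_Λ`
extends to a bijection `V → W`, and the induced isomorphism `A(Γ) → A(Λ)` is an isometry that
maps standard geodesics to standard geodesics.
-/

section WordMetric

variable {G H : Type*} [Group G] [Group H]

theorem exists_list_prod_eq_zpow (a : G) (n : ℤ) :
    ∃ L : List G, (∀ b ∈ L, b = a ∨ b = a⁻¹) ∧ L.prod = a ^ n ∧ L.length = n.natAbs := by
  rcases le_or_gt 0 n with hn | hn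
  · refine ⟨List.replicate n.natAbs a, fun b hb => Or.inl (List.eq_of_mem_replicate hb), ?_,
      List.length_replicate⟩
    rw [List.prod_replicate, ← zpow_natCast, Int.natAbs_of_nonneg hn]
  · refine ⟨List.replicate n.natAbs a⁻¹, fun b hb => Or.inr (List.eq_of_mem_replicate hb), ?_,
      List.length_replicate⟩
    rw [List.prod_replicate, inv_pow, ← zpow_natCast, ← zpow_neg,
      Int.ofNat_natAbs_of_nonpos hn.le, neg_neg]

theorem wordDist_map (φ : G ≃* H) (S : Set G) (g h : G) :
    wordDist (φ '' S) (φ g) (φ h) = wordDist S g h := by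
  have hword : ∀ L : List G, (∀ x ∈ L, x ∈ S ∨ x⁻¹ ∈ S) ↔
      ∀ y ∈ L.map φ, y ∈ φ '' S ∨ y⁻¹ ∈ φ '' S := fun L => by
    simp [← map_inv]
  unfold wordDist
  congr 1
  ext r
  constructor
  · rintro ⟨L, ⟨hL, hprod⟩, rfl⟩
    refine ⟨L.map φ.symm, ⟨?_, ?_⟩, by simp⟩
    · rw [hword]
      simpa [Function.comp_def] using hL
    · apply φ.injective
      simpa [map_list_prod] using hprod
  · rintro ⟨L, ⟨hL, hprod⟩, rfl⟩
    exact ⟨L.map φ, ⟨(hword L).mp hL, by simp [map_list_prod, ← hprod]⟩, by simp⟩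

end WordMetric

section QuasiIsometry

variable {X Y : Type*}

theorem IsQIWith.conj {X' Y' : Type*} [PseudoMetricSpace X'] [PseudoMetricSpace Y']
    {K A : ℝ} {dX : X → X → ℝ} {dY : Y → Y → ℝ} {f : X → Y} (eX : X ≃ X') (eY : Y ≃ Y')
    (hX : ∀ a b, dX a b = dist (eX a) (eX b)) (hY : ∀ a b, dY a b = dist (eY a) (eY b))
    (hf : IsQIWith K A dX dY f) : IsQIWith K A dist dist (eY ∘ f ∘ eX.symm) := by
  obtain ⟨hK, hA, hbd, hsurj⟩ := hf
  refine ⟨hK, hA, fun x x' => ?_, fun y => ?_⟩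
  · simpa [hX, hY] using hbd (eX.symm x) (eX.symm x')
  · obtain ⟨x, hx⟩ := hsurj (eY.symm y)
    exact ⟨eX x, by simpa [hY] using hx⟩

theorem IsQIWith.exists_inverse [PseudoMetricSpace X] [PseudoMetricSpace Y] {K A : ℝ}
    {f : X → Y} (hf : IsQIWith K A dist dist f) :
    ∃ g : Y → X, IsQIWith K (3 * K * A) dist dist g := by
  obtain ⟨hK, hA, hbd, hsurj⟩ := hf
  choose g hg using hsurj
  have hK0 : 0 < K := by linarith
  have hKA : A ≤ K * A := le_mul_of_one_le_left hA hK
  have hfg : ∀ y y', |dist (f (g y)) (f (g y')) - dist y y'| ≤ 2 * A := fun y y' => by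
    have := dist_dist_dist_le (f (g y)) (f (g y')) y y'
    rw [Real.dist_eq] at this
    linarith [hg y, hg y']
  refine ⟨g, hK, by positivity, fun y y' => ⟨?_, ?_⟩, fun x => ⟨f x, ?_⟩⟩
  · have : dist y y' ≤ K * dist (g y) (g y') + 3 * A := by
      linarith [(hbd (g y) (g y')).2, (abs_le.1 (hfg y y')).1]
    rw [sub_le_iff_le_add, div_le_iff₀ hK0]
    nlinarith
  · have : dist (g y) (g y') / K ≤ dist y y' + 3 * A := by
      linarith [(hbd (g y) (g y')).1, (abs_le.1 (hfg y y')).2]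
    rw [div_le_iff₀ hK0] at this
    nlinarith
  · have : dist (g (f x)) x / K ≤ 2 * A := by
      linarith [(hbd (g (f x)) x).1, hg (f x)]
    rw [div_le_iff₀ hK0] at this
    nlinarith

end QuasiIsometry

theorem Set.InjOn.exists_equiv_eqOn {V W : Type} [Fintype V] [Fintype W] {r : V → W}
    {s : Set V} (hcard : Fintype.card V = Fintype.card W) (hr : Set.InjOn r s) :
    ∃ e : V ≃ W, Set.EqOn e r s := by
  obtain ⟨g, hg⟩ := Set.MapsTo.exists_equiv_extend_of_card_eq (t := Finset.univ)
    (by rw [Finset.card_univ, hcard]) (fun _ _ => Finset.mem_coe.2 (Finset.mem_univ _)) hr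
  exact ⟨g.trans (Equiv.subtypeUnivEquiv Finset.mem_univ), hg⟩

section Functoriality

variable {V W : Type} {Γ : SimpleGraph V} {Λ : SimpleGraph W}

theorem raagGen_commute {x y : V} (h : Γ.Adj x y) :
    Commute (raagGen Γ x) (raagGen Γ y) := by
  have hrel : PresentedGroup.mk (raagRels Γ)
      (FreeGroup.of x * FreeGroup.of y * (FreeGroup.of x)⁻¹ * (FreeGroup.of y)⁻¹) = 1 :=
    (QuotientGroup.eq_one_iff _).mpr (Subgroup.subset_normalClosure ⟨x, y, h, rfl⟩)
  rw [← commutatorElement_eq_one_iff_commute, commutatorElement_def]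
  simpa [raagGen, PresentedGroup.of] using hrel

def raagHom (e : Γ →g Λ) : Raag Γ →* Raag Λ :=
  PresentedGroup.toGroup (f := fun x => raagGen Λ (e x)) <| by
    rintro r ⟨x, y, hxy, rfl⟩
    simp only [map_mul, map_inv, FreeGroup.lift_apply_of]
    rw [← commutatorElement_def]
    exact commutatorElement_eq_one_iff_commute.mpr (raagGen_commute (e.map_adj hxy))

@[simp] theorem raagHom_gen (e : Γ →g Λ) (x : V) :
    raagHom e (raagGen Γ x) = raagGen Λ (e x) :=
  PresentedGroup.toGroup.of _

def raagCongr (e : Γ ≃g Λ) : Raag Γ ≃* Raag Λ :=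
  MonoidHom.toMulEquiv (raagHom e.toHom) (raagHom e.symm.toHom)
    (PresentedGroup.ext fun x => show raagHom _ (raagHom _ (raagGen Γ x)) = raagGen Γ x by simp)
    (PresentedGroup.ext fun x => show raagHom _ (raagHom _ (raagGen Λ x)) = raagGen Λ x by simp)

@[simp] theorem raagCongr_gen (e : Γ ≃g Λ) (x : V) :
    raagCongr e (raagGen Γ x) = raagGen Λ (e x) :=
  raagHom_gen _ x

theorem raagDist_raagCongr (e : Γ ≃g Λ) (g h : Raag Γ) :
    raagDist Λ (raagCongr e g) (raagCongr e h) = raagDist Γ g h := by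
  have hgen : raagCongr e '' Set.range (raagGen Γ) = Set.range (raagGen Λ) := by
    rw [← Set.range_comp]
    simpa [Function.comp_def] using e.surjective.range_comp (raagGen Λ)
  rw [raagDist, ← hgen, wordDist_map]
  rfl

theorem image_raagCongr_carrier (e : Γ ≃g Λ) (l : StdGeod Γ) :
    raagCongr e '' l.carrier = (⟨raagCongr e l.base, e l.label⟩ : StdGeod Λ).carrier := by
  simp only [StdGeod.carrier, ← Set.range_comp]
  congr 1
  funext n
  simp [StdGeod.param]

end Functoriality

section Complete

open Multiplicative

variable {V : Type}

theorem raag_top_mul_comm (a b : Raag (⊤ : SimpleGraph V)) : a * b = b * a := by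
  have hle := Subgroup.closure_le_centralizer_centralizer
    (Set.range (PresentedGroup.of (rels := raagRels (⊤ : SimpleGraph V))))
  rw [PresentedGroup.closure_range_of] at hle
  refine Set.centralizer_centralizer_comm_of_comm ?_ a (hle trivial) b (hle trivial)
  rintro _ ⟨x, rfl⟩ _ ⟨y, rfl⟩
  rcases eq_or_ne x y with rfl | hxy
  · rfl
  · exact raagGen_commute (Γ := ⊤) hxy

instance : CommGroup (Raag (⊤ : SimpleGraph V)) where
  mul_comm := raag_top_mul_comm

variable [DecidableEq V]

def raagAbel (Γ : SimpleGraph V) : Raag Γ →* Multiplicative (V → ℤ) :=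
  PresentedGroup.toGroup (f := fun x => ofAdd (Pi.single x 1)) <| by
    rintro r ⟨x, y, -, rfl⟩
    simp only [map_mul, map_inv, FreeGroup.lift_apply_of]
    rw [← commutatorElement_def]
    exact commutatorElement_eq_one_iff_commute.mpr (Commute.all _ _)

theorem raagAbel_gen_zpow (Γ : SimpleGraph V) (x : V) (n : ℤ) :
    raagAbel Γ (raagGen Γ x ^ n) = ofAdd (Pi.single x n) := by
  rw [map_zpow, raagAbel, raagGen, PresentedGroup.toGroup.of, ← ofAdd_zsmul, ← Pi.single_smul,
    smul_eq_mul, mul_one]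

variable [Fintype V]

def raagOfCoords : Multiplicative (V → ℤ) →* Raag (⊤ : SimpleGraph V) where
  toFun c := ∏ x, raagGen ⊤ x ^ c.toAdd x
  map_one' := by simp
  map_mul' c d := by simp [zpow_add, Finset.prod_mul_distrib]

def raagTopEquiv : Raag (⊤ : SimpleGraph V) ≃* Multiplicative (V → ℤ) :=
  MonoidHom.toMulEquiv (raagAbel ⊤) raagOfCoords
    (PresentedGroup.ext fun x => by
      show raagOfCoords (raagAbel ⊤ (raagGen ⊤ x ^ (1 : ℤ))) = raagGen ⊤ x
      simp only [raagAbel_gen_zpow, raagOfCoords, MonoidHom.coe_mk, OneHom.coe_mk, toAdd_ofAdd]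
      rw [Fintype.prod_eq_single x fun y hy => by simp [Pi.single_eq_of_ne hy]]
      simp)
    (MonoidHom.ext fun c => by
      simp only [raagOfCoords, MonoidHom.coe_comp, MonoidHom.coe_mk, OneHom.coe_mk,
        Function.comp_apply, map_prod, raagAbel_gen_zpow, MonoidHom.id_apply]
      apply toAdd.injective
      simp [toAdd_prod, Finset.univ_sum_single])

def raagCoords (g : Raag (⊤ : SimpleGraph V)) : WithLp 1 (V → ℤ) :=
  WithLp.toLp 1 (raagTopEquiv g).toAdd

theorem raagCoords_bijective : Function.Bijective (raagCoords (V := V)) :=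
  (WithLp.toLp_bijective 1).comp (toAdd.bijective.comp raagTopEquiv.bijective)

theorem raagCoords_mul (g h : Raag (⊤ : SimpleGraph V)) :
    raagCoords (g * h) = raagCoords g + raagCoords h := by
  simp [raagCoords]

theorem raagCoords_inv (g : Raag (⊤ : SimpleGraph V)) : raagCoords g⁻¹ = -raagCoords g := by
  simp [raagCoords]

theorem raagCoords_gen_zpow (x : V) (n : ℤ) :
    raagCoords (raagGen ⊤ x ^ n) = PiLp.single 1 x n := by
  simp [raagCoords, raagTopEquiv, raagAbel_gen_zpow, PiLp.toLp_single]

theorem norm_raagCoords_gen_zpow (x : V) (n : ℤ) :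
    ‖raagCoords (raagGen ⊤ x ^ n)‖ = |(n : ℝ)| := by
  rw [raagCoords_gen_zpow, PiLp.norm_single, Int.norm_eq_abs]

theorem norm_raagCoords_prod_le (L : List (Raag (⊤ : SimpleGraph V)))
    (hL : ∀ a ∈ L, a ∈ Set.range (raagGen ⊤) ∨ a⁻¹ ∈ Set.range (raagGen ⊤)) :
    ‖raagCoords L.prod‖ ≤ L.length := by
  induction L with
  | nil => simp [raagCoords]
  | cons a L ih =>
    have ha : ‖raagCoords a‖ ≤ 1 := by
      obtain ⟨x, rfl⟩ | ⟨x, hx⟩ := hL a List.mem_cons_self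
      · simpa using (norm_raagCoords_gen_zpow x 1).le
      · rw [← inv_inv a, ← hx, ← zpow_neg_one, norm_raagCoords_gen_zpow]
        simp
    rw [List.prod_cons, raagCoords_mul, List.length_cons, Nat.cast_succ]
    linarith [norm_add_le (raagCoords a) (raagCoords L.prod),
      ih fun b hb => hL b (List.mem_cons_of_mem a hb)]

theorem exists_word_length_eq_norm (g : Raag (⊤ : SimpleGraph V)) :
    ∃ L : List (Raag (⊤ : SimpleGraph V)),
      (∀ a ∈ L, a ∈ Set.range (raagGen ⊤) ∨ a⁻¹ ∈ Set.range (raagGen ⊤)) ∧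
      L.prod = g ∧ (L.length : ℝ) = ‖raagCoords g‖ := by
  choose L hLmem hLprod hLlen using
    fun x => exists_list_prod_eq_zpow (raagGen ⊤ x) (raagCoords g x)
  refine ⟨Finset.univ.toList.flatMap L, ?_, ?_, ?_⟩
  · simp only [List.mem_flatMap]
    rintro a ⟨x, -, ha⟩
    rcases hLmem x a ha with rfl | rfl
    · exact Or.inl ⟨x, rfl⟩
    · exact Or.inr ⟨x, (inv_inv _).symm⟩
  · rw [List.flatMap, List.prod_flatten, List.map_map, Function.comp_def]
    simp only [hLprod, Finset.prod_map_toList]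
    exact raagTopEquiv.symm_apply_apply g
  · rw [List.length_flatMap, Finset.sum_map_toList]
    simp only [hLlen, PiLp.norm_eq_of_L1, Int.norm_eq_abs, Nat.cast_sum, Nat.cast_natAbs,
      Int.cast_abs]

theorem raagDist_top (g h : Raag (⊤ : SimpleGraph V)) :
    raagDist ⊤ g h = dist (raagCoords g) (raagCoords h) := by
  have hdist : dist (raagCoords g) (raagCoords h) = ‖raagCoords (g⁻¹ * h)‖ := by
    rw [dist_comm, dist_eq_norm, raagCoords_mul, raagCoords_inv, neg_add_eq_sub]
  obtain ⟨L, hL, hprod, hlen⟩ := exists_word_length_eq_norm (g⁻¹ * h)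
  have hL' : L ∈ {l | (∀ x ∈ l, x ∈ Set.range (raagGen ⊤) ∨ x⁻¹ ∈ Set.range (raagGen ⊤)) ∧
      g * l.prod = h} := ⟨hL, by rw [hprod, mul_inv_cancel_left]⟩
  rw [hdist]
  apply le_antisymm
  · rw [← hlen]
    exact csInf_le ⟨0, by rintro _ ⟨l, -, rfl⟩; positivity⟩ ⟨L, hL', rfl⟩
  · refine le_csInf ⟨_, L, hL', rfl⟩ ?_
    rintro _ ⟨l, ⟨hl, hlprod⟩, rfl⟩
    rw [← hlprod, inv_mul_cancel_left]
    exact norm_raagCoords_prod_le l hl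

end Complete

section Geodesics

variable {V : Type} [DecidableEq V] [Fintype V]

theorem raagCoords_param (l : StdGeod (⊤ : SimpleGraph V)) (n : ℤ) :
    raagCoords (l.param n) = raagCoords l.base + PiLp.single 1 l.label n := by
  rw [StdGeod.param, raagCoords_mul, raagCoords_gen_zpow]

theorem label_eq_of_forall_exists_raagDist_le {k l : StdGeod (⊤ : SimpleGraph V)} {R : ℝ}
    (h : ∀ p ∈ k.carrier, ∃ q ∈ l.carrier, raagDist ⊤ p q ≤ R) : k.label = l.label := by
  by_contra hne
  -- the `k.label`-coordinate is constant (equal to `b`) on `l` but takes every value on `k`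
  set a := raagCoords k.base k.label
  set b := raagCoords l.base k.label
  obtain ⟨_, ⟨m, rfl⟩, hq⟩ := h (k.param (b - a + ⌈R⌉ + 1)) ⟨_, rfl⟩
  have hcoord := (PiLp.dist_apply_le _ _ k.label).trans ((raagDist_top _ _).symm.trans_le hq)
  rw [raagCoords_param, raagCoords_param] at hcoord
  simp only [PiLp.add_apply, PiLp.single_eq_same, PiLp.single_eq_of_ne' 1 (Ne.symm hne),
    add_zero, Int.dist_eq, Int.cast_add, Int.cast_sub, Int.cast_one] at hcoord
  have hceil : R < ⌈R⌉ + 1 := (Int.le_ceil R).trans_lt (lt_add_one _)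
  linarith [le_abs_self ((a : ℝ) + (b - a + ⌈R⌉ + 1) - b)]

theorem parallel_iff_label_eq {l k : StdGeod (⊤ : SimpleGraph V)} :
    Parallel l k ↔ l.label = k.label := by
  refine ⟨fun ⟨_, _, h, _⟩ => label_eq_of_forall_exists_raagDist_le h, fun h => ?_⟩
  have hpar : ∀ n, raagDist ⊤ (l.param n) (k.param n) =
      dist (raagCoords l.base) (raagCoords k.base) := fun n => by
    rw [raagDist_top, raagCoords_param, raagCoords_param, h, dist_add_right]
  refine ⟨dist (raagCoords l.base) (raagCoords k.base), dist_nonneg, ?_, ?_⟩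
  · rintro _ ⟨n, rfl⟩
    exact ⟨k.param n, ⟨n, rfl⟩, (hpar n).le⟩
  · rintro _ ⟨n, rfl⟩
    exact ⟨l.param n, ⟨n, rfl⟩, (hpar n).le⟩

theorem parClass_eq_parClass_iff {l k : StdGeod (⊤ : SimpleGraph V)} :
    parClass l = parClass k ↔ l.label = k.label := by
  constructor
  · intro h
    obtain ⟨j, hj, hkj⟩ : l.carrier ∈ parClass k := h ▸ ⟨l, rfl, parallel_iff_label_eq.mpr rfl⟩
    have hlj : l.label = j.label := label_eq_of_forall_exists_raagDist_le (R := 0)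
      fun p hp => ⟨p, hj ▸ hp, by rw [raagDist_top, dist_self]⟩
    rw [hlj, parallel_iff_label_eq.mp hkj]
  · intro h
    ext S
    simp only [parClass, Set.mem_ofPred_eq, parallel_iff_label_eq, h]

theorem label_eq_of_hausLE_of_finHaus {S : Set (Raag (⊤ : SimpleGraph V))}
    {k l : StdGeod (⊤ : SimpleGraph V)} {A : ℝ} (hk : HausLE (raagDist ⊤) S k.carrier A)
    (hl : FinHaus (raagDist ⊤) S l.carrier) : k.label = l.label := by
  obtain ⟨R, -, hR, -⟩ := hl
  refine label_eq_of_forall_exists_raagDist_le (R := A + R) fun p hp => ?_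
  obtain ⟨s, hs, hsp⟩ := hk.2 p hp
  obtain ⟨q, hq, hsq⟩ := hR s hs
  refine ⟨q, hq, ?_⟩
  rw [raagDist_top] at hsp hsq ⊢
  linarith [dist_triangle_left (raagCoords p) (raagCoords q) (raagCoords s)]

def axisClass (u : V) : Set (Set (Raag (⊤ : SimpleGraph V))) :=
  parClass (⟨1, u⟩ : StdGeod ⊤)

theorem parClass_eq_axisClass (l : StdGeod (⊤ : SimpleGraph V)) :
    parClass l = axisClass l.label :=
  parClass_eq_parClass_iff.mpr rfl

theorem axisClass_injective : Function.Injective (axisClass (V := V)) :=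
  fun _ _ h => parClass_eq_parClass_iff.mp h

theorem mem_axisClass_iff {u : V} {S : Set (Raag (⊤ : SimpleGraph V))} :
    S ∈ axisClass u ↔ ∃ k : StdGeod ⊤, S = k.carrier ∧ k.label = u := by
  simp only [axisClass, parClass, Set.mem_ofPred_eq, parallel_iff_label_eq, eq_comm (a := u)]

theorem periph_top (B : Set V) : periph ⊤ B = axisClass '' B := by
  ext F
  constructor
  · rintro ⟨l, hl, rfl⟩
    exact ⟨l.label, hl, (parClass_eq_axisClass l).symm⟩
  · rintro ⟨u, hu, rfl⟩
    exact ⟨⟨1, u⟩, hu, rfl⟩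

theorem image_image_axisClass {W : Type} [DecidableEq W] [Fintype W]
    (e : (⊤ : SimpleGraph V) ≃g (⊤ : SimpleGraph W)) (u : V) :
    Set.image (raagCongr e) '' axisClass u = axisClass (e u) := by
  ext S
  simp only [Set.mem_image, mem_axisClass_iff]
  constructor
  · rintro ⟨_, ⟨k, rfl, rfl⟩, rfl⟩
    exact ⟨_, image_raagCongr_carrier e k, rfl⟩
  · rintro ⟨k, rfl, hk⟩
    refine ⟨_, ⟨⟨(raagCongr e).symm k.base, u⟩, rfl, rfl⟩, ?_⟩
    rw [image_raagCongr_carrier, MulEquiv.apply_symm_apply, ← hk]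

end Geodesics

section Counting

theorem le_of_forall_pow_le_mul_pow {n m : ℕ} {C : ℝ}
    (h : ∀ R : ℕ, ((2 * R + 1 : ℕ) : ℝ) ^ n ≤ C * ((2 * R + 1 : ℕ) : ℝ) ^ m) : n ≤ m := by
  by_contra! hmn
  obtain ⟨R, hR⟩ := exists_nat_gt C
  set t : ℝ := ((2 * R + 1 : ℕ) : ℝ)
  have ht : 1 ≤ t := by simp [t]
  have htC : t * t ^ m ≤ C * t ^ m :=
    calc t * t ^ m = t ^ (m + 1) := by ring
      _ ≤ t ^ n := pow_le_pow_right₀ ht hmn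
      _ ≤ C * t ^ m := h R
  have : t ≤ C := le_of_mul_le_mul_right htC (by positivity)
  have : (R : ℝ) < t := by simp only [t]; push_cast; linarith
  linarith

variable {V : Type} [Fintype V]

theorem one_le_dist_of_ne {x y : WithLp 1 (V → ℤ)} (h : x ≠ y) : 1 ≤ dist x y := by
  obtain ⟨i, hi⟩ : ∃ i, x i ≠ y i := by
    by_contra! hxy
    exact h (WithLp.ofLp_injective 1 (funext hxy))
  exact (Int.pairwise_one_le_dist hi).trans (PiLp.dist_apply_le x y i)

theorem dist_natCast_smul (s : ℕ) (x y : WithLp 1 (V → ℤ)) :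
    dist ((s : ℤ) • x) ((s : ℤ) • y) = s * dist x y := by
  rw [dist_eq_norm, ← smul_sub, norm_smul, ← dist_eq_norm, Int.norm_natCast]

theorem IsQIWith.injective_natCast_smul {W : Type} [Fintype W] {K A : ℝ}
    {f : WithLp 1 (V → ℤ) → WithLp 1 (W → ℤ)} (hf : IsQIWith K A dist dist f) {s : ℕ}
    (hs : K * A < s) : Function.Injective fun b : V → ℤ => f ((s : ℤ) • WithLp.toLp 1 b) := by
  intro b b' (hbb' : f _ = f _)
  by_contra hne
  have hfib := (hf.2.2.1 ((s : ℤ) • WithLp.toLp 1 b) ((s : ℤ) • WithLp.toLp 1 b')).1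
  rw [hbb', dist_self, sub_nonpos, div_le_iff₀ (by linarith [hf.1]), dist_natCast_smul] at hfib
  have hsep : 1 ≤ dist (WithLp.toLp 1 b) (WithLp.toLp 1 b') :=
    one_le_dist_of_ne fun h => hne (WithLp.toLp_injective 1 h)
  nlinarith

variable [DecidableEq V]

def intBox (c : V → ℤ) (R : ℕ) : Finset (V → ℤ) :=
  Fintype.piFinset fun i => Finset.Icc (c i - R) (c i + R)

theorem card_intBox (c : V → ℤ) (R : ℕ) :
    (intBox c R).card = (2 * R + 1) ^ Fintype.card V := by
  have hIcc : ∀ i, (Finset.Icc (c i - R) (c i + R)).card = 2 * R + 1 := fun i => by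
    rw [Int.card_Icc]
    omega
  simp only [intBox, Fintype.card_piFinset, hIcc, Finset.prod_const, Finset.card_univ]

theorem mem_intBox_of_dist_le {x c : WithLp 1 (V → ℤ)} {R : ℕ} (h : dist x c ≤ R) :
    x.ofLp ∈ intBox c.ofLp R := by
  simp only [intBox, Fintype.mem_piFinset, Finset.mem_Icc]
  intro i
  have hi : |((x i - c i : ℤ) : ℝ)| ≤ R := by
    simpa [Int.dist_eq] using (PiLp.dist_apply_le x c i).trans h
  rw [← Int.cast_abs, ← Int.cast_natCast, Int.cast_le, abs_le] at hi
  constructor <;> linarith [hi.1, hi.2]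

theorem dist_le_of_mem_intBox {x c : V → ℤ} {R : ℕ} (h : x ∈ intBox c R) :
    dist (WithLp.toLp 1 x) (WithLp.toLp 1 c) ≤ Fintype.card V * R := by
  simp only [intBox, Fintype.mem_piFinset, Finset.mem_Icc] at h
  rw [PiLp.dist_eq_of_L1]
  calc ∑ i, dist (x i) (c i) ≤ ∑ _i : V, (R : ℝ) := Finset.sum_le_sum fun i _ => by
        rw [Int.dist_eq, ← Int.cast_sub, ← Int.cast_abs, ← Int.cast_natCast, Int.cast_le,
          abs_le]
        constructor <;> linarith [(h i).1, (h i).2]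
    _ = Fintype.card V * R := by simp

theorem card_le_card_of_isQIWith {W : Type} [Fintype W] [DecidableEq W] {K A : ℝ}
    {f : WithLp 1 (V → ℤ) → WithLp 1 (W → ℤ)} (hf : IsQIWith K A dist dist f) :
    Fintype.card V ≤ Fintype.card W := by
  set n := Fintype.card V
  set s : ℕ := ⌊K * A⌋₊ + 1
  have hs : K * A < s := by simpa [s] using Nat.lt_floor_add_one (K * A)
  have hK : 0 ≤ K := by linarith [hf.1]
  have hA : 0 ≤ A := hf.2.1
  set x : (V → ℤ) → WithLp 1 (V → ℤ) := fun b => (s : ℤ) • WithLp.toLp 1 b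
  set C : ℝ := 2 * K * n * s + 2 * A + 3
  refine le_of_forall_pow_le_mul_pow (C := C ^ Fintype.card W) fun R => ?_
  set R' : ℕ := ⌈K * (s * (n * R)) + A⌉₊
  have hmaps : ∀ b ∈ intBox 0 R, (f (x b)).ofLp ∈ intBox (f (x 0)).ofLp R' := by
    intro b hb
    refine mem_intBox_of_dist_le (((hf.2.2.1 _ _).2.trans ?_).trans (Nat.le_ceil _))
    have := dist_le_of_mem_intBox hb
    rw [dist_natCast_smul]
    gcongr
  have hcard := Finset.card_le_card_of_injOn _ hmaps
    ((WithLp.ofLp_injective 1).comp (hf.injective_natCast_smul hs)).injOn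
  rw [card_intBox, card_intBox] at hcard
  have hR' : ((2 * R' + 1 : ℕ) : ℝ) ≤ C * ((2 * R + 1 : ℕ) : ℝ) := by
    have := (Nat.ceil_lt_add_one (by positivity : 0 ≤ K * (s * (n * R)) + A)).le
    push_cast at this ⊢
    nlinarith [mul_nonneg (mul_nonneg hK (Nat.cast_nonneg n)) (Nat.cast_nonneg s)]
  calc ((2 * R + 1 : ℕ) : ℝ) ^ n ≤ ((2 * R' + 1 : ℕ) : ℝ) ^ Fintype.card W := by
        exact_mod_cast hcard
    _ ≤ (C * ((2 * R + 1 : ℕ) : ℝ)) ^ Fintype.card W := by gcongr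
    _ = C ^ Fintype.card W * ((2 * R + 1 : ℕ) : ℝ) ^ Fintype.card W := mul_pow _ _ _

theorem card_eq_of_isQIWith_raagDist {W : Type} [Fintype W] [DecidableEq W] {K A : ℝ}
    {f : Raag (⊤ : SimpleGraph V) → Raag (⊤ : SimpleGraph W)}
    (hf : IsQIWith K A (raagDist ⊤) (raagDist ⊤) f) : Fintype.card V = Fintype.card W := by
  have hF := hf.conj (Equiv.ofBijective _ raagCoords_bijective)
    (Equiv.ofBijective _ raagCoords_bijective) raagDist_top raagDist_top
  obtain ⟨g, hg⟩ := hF.exists_inverse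
  exact le_antisymm (card_le_card_of_isQIWith hF) (card_le_card_of_isQIWith hg)

end Counting

section DecoratedRelativeQI

variable {V W : Type} [Fintype V] [DecidableEq V] [Fintype W] [DecidableEq W]
  {O : Type} {BΓ : Set V} {BΛ : Set W}
  {δΓ : Set (Set (Raag (⊤ : SimpleGraph V))) → O} {δΛ : Set (Set (Raag (⊤ : SimpleGraph W))) → O}

theorem IsDecorBasedRelQI.exists_bijOn {δhatΓ : V → O} {δhatΛ : W → O} {v : V} {w : W}
    {f : Raag (⊤ : SimpleGraph V) → Raag (⊤ : SimpleGraph W)}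
    {fs : Set (Set (Raag (⊤ : SimpleGraph V))) → Set (Set (Raag (⊤ : SimpleGraph W)))}
    (h : IsDecorBasedRelQI ⊤ ⊤ BΓ BΛ δΓ δΛ ⟨1, v⟩ ⟨1, w⟩ f fs) (hv : v ∈ BΓ)
    (hδΓ : ∀ u ∈ BΓ, δΓ (axisClass u) = δhatΓ u) (hδΛ : ∀ u ∈ BΛ, δΛ (axisClass u) = δhatΛ u) :
    ∃ r : V → W, Set.BijOn r BΓ BΛ ∧ (∀ u ∈ BΓ, δhatΛ (r u) = δhatΓ u) ∧ r v = w := by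
  obtain ⟨⟨K, A, -, hbij, hhaus⟩, hdec, hbase⟩ := h
  simp only [periph_top] at hbij hhaus hdec
  have : Nonempty W := ⟨w⟩
  have haxisΓ : Set.BijOn axisClass BΓ (axisClass '' BΓ) := axisClass_injective.injOn.bijOn_image
  have haxisΛ : Set.BijOn axisClass BΛ (axisClass '' BΛ) := axisClass_injective.injOn.bijOn_image
  set r := Function.invFunOn axisClass BΛ ∘ fs ∘ axisClass
  have hr : Set.BijOn r BΓ BΛ := (haxisΛ.symm haxisΛ.invOn_invFunOn.symm).comp (hbij.comp haxisΓ)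
  have hclass : ∀ u ∈ BΓ, axisClass (r u) = fs (axisClass u) :=
    fun u hu => haxisΛ.invOn_invFunOn.2 (hbij.mapsTo (haxisΓ.mapsTo hu))
  refine ⟨r, hr, fun u hu => ?_, ?_⟩
  · rw [← hδΛ _ (hr.mapsTo hu), hclass u hu, hdec _ (Set.mem_image_of_mem _ hu), hδΓ u hu]
  · obtain ⟨b, hb, hvb⟩ := (hhaus _ (Set.mem_image_of_mem _ hv)).1 _
      (mem_axisClass_iff.2 ⟨⟨1, v⟩, rfl, rfl⟩)
    rw [← hclass v hv] at hb
    obtain ⟨k, rfl, hk⟩ := mem_axisClass_iff.1 hb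
    exact hk ▸ label_eq_of_hausLE_of_finHaus hvb hbase

theorem isDecorBasedRelQI_raagCongr (e : (⊤ : SimpleGraph V) ≃g (⊤ : SimpleGraph W))
    (hB : Set.BijOn e BΓ BΛ) (hδ : ∀ u ∈ BΓ, δΛ (axisClass (e u)) = δΓ (axisClass u))
    {v : V} {w : W} (hv : e v = w) :
    IsDecorBasedRelQI ⊤ ⊤ BΓ BΛ δΓ δΛ ⟨1, v⟩ ⟨1, w⟩ (raagCongr e)
      (Set.image (Set.image (raagCongr e))) := by
  have hself : ∀ S : Set (Raag (⊤ : SimpleGraph W)), HausLE (raagDist ⊤) S S 0 := fun S =>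
    ⟨fun s hs => ⟨s, hs, by rw [raagDist_top, dist_self]⟩,
      fun s hs => ⟨s, hs, by rw [raagDist_top, dist_self]⟩⟩
  have hinj : Function.Injective (Set.image (Set.image (raagCongr e))) :=
    Set.image_injective.2 (Set.image_injective.2 (raagCongr e).injective)
  refine ⟨⟨1, 0, ⟨le_rfl, le_rfl, fun x x' => ?_, fun y => ⟨(raagCongr e).symm y, ?_⟩⟩, ?_, ?_⟩,
    ?_, ?_⟩
  · simp [raagDist_raagCongr]
  · rw [MulEquiv.apply_symm_apply, raagDist_top, dist_self]
  · rw [periph_top, periph_top]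
    convert hinj.injOn.bijOn_image (s := axisClass '' BΓ)
    rw [Set.image_image, ← hB.image_eq, Set.image_image]
    exact Set.image_congr fun u _ => (image_image_axisClass e u).symm
  · rw [periph_top]
    rintro _ ⟨u, -, rfl⟩
    exact ⟨fun a ha => ⟨_, Set.mem_image_of_mem _ ha, hself _⟩,
      by rintro _ ⟨a, ha, rfl⟩; exact ⟨a, ha, hself _⟩⟩
  · rw [periph_top]
    rintro _ ⟨u, hu, rfl⟩
    rw [image_image_axisClass, hδ u hu]
  · rw [image_raagCongr_carrier, map_one, hv]
    exact ⟨0, le_rfl, hself _⟩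

end DecoratedRelativeQI

theorem stmt18_general {V W : Type} [Fintype V] [Fintype W]
    (Γ : SimpleGraph V) (Λ : SimpleGraph W)
    (hΓ : ∀ x y : V, x ≠ y → Γ.Adj x y) (hΛ : ∀ x y : W, x ≠ y → Λ.Adj x y)
    (n m : ℕ) (hn : Fintype.card V = n) (hm : Fintype.card W = m)
    (O : Type) (BΓ : Set V) (BΛ : Set W)
    (δhatΓ : V → O) (δhatΛ : W → O)
    (δΓ : Set (Set (Raag Γ)) → O) (δΛ : Set (Set (Raag Λ)) → O)
    (hδΓ : ∀ l : StdGeod Γ, l.label ∈ BΓ → δΓ (parClass l) = δhatΓ l.label)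
    (hδΛ : ∀ l : StdGeod Λ, l.label ∈ BΛ → δΛ (parClass l) = δhatΛ l.label)
    (v : V) (hv : v ∈ BΓ) (w : W) :
    (∃ (f : Raag Γ → Raag Λ) (fs : Set (Set (Raag Γ)) → Set (Set (Raag Λ))),
        IsDecorBasedRelQI Γ Λ BΓ BΛ δΓ δΛ (⟨1, v⟩ : StdGeod Γ) (⟨1, w⟩ : StdGeod Λ) f fs) ↔
      (n = m ∧ ∃ r : V → W, Set.BijOn r BΓ BΛ ∧ (∀ u ∈ BΓ, δhatΛ (r u) = δhatΓ u) ∧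
        r v = w) := by
  classical
  obtain rfl : Γ = ⊤ := top_unique fun x y hxy => hΓ x y hxy
  obtain rfl : Λ = ⊤ := top_unique fun x y hxy => hΛ x y hxy
  subst hn hm
  have hδΓ' : ∀ u ∈ BΓ, δΓ (axisClass u) = δhatΓ u := fun u hu => hδΓ ⟨1, u⟩ hu
  have hδΛ' : ∀ u ∈ BΛ, δΛ (axisClass u) = δhatΛ u := fun u hu => hδΛ ⟨1, u⟩ hu
  constructor
  · rintro ⟨f, fs, hf⟩
    obtain ⟨K, A, hqi, -⟩ := hf.1
    exact ⟨card_eq_of_isQIWith_raagDist hqi, hf.exists_bijOn hv hδΓ' hδΛ'⟩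
  · rintro ⟨hcard, r, hr, hrδ, hrv⟩
    obtain ⟨e, he⟩ := hr.injOn.exists_equiv_eqOn hcard
    have he' : Set.BijOn e BΓ BΛ := hr.congr he.symm
    refine ⟨_, _, isDecorBasedRelQI_raagCongr (SimpleGraph.Iso.completeGraph e) he'
      (fun u hu => ?_) ((he hv).trans hrv)⟩
    rw [hδΓ' u hu, ← hrδ u hu, ← he hu]
    exact hδΛ' _ (he'.mapsTo hu)

/-- For free abelian RAAGs (complete defining graphs), a
decoration-preserving based relative quasi-isometry exists if and only if the ranks
agree and there is a decoration-preserving bijection of the labelling sets matching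
the base labels. -/
theorem stmt18 {V W : Type} [Fintype V] [Fintype W]
    (Γ : SimpleGraph V) (Λ : SimpleGraph W)
    (hΓ : ∀ x y : V, x ≠ y → Γ.Adj x y) (hΛ : ∀ x y : W, x ≠ y → Λ.Adj x y)
    (n m : ℕ) (hn : Fintype.card V = n) (hm : Fintype.card W = m)
    (O : Type) (BΓ : Set V) (BΛ : Set W)
    (δhatΓ : V → O) (δhatΛ : W → O)
    (δΓ : Set (Set (Raag Γ)) → O) (δΛ : Set (Set (Raag Λ)) → O)
    (hδΓ : ∀ l : StdGeod Γ, l.label ∈ BΓ → δΓ (parClass l) = δhatΓ l.label)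
    (hδΛ : ∀ l : StdGeod Λ, l.label ∈ BΛ → δΛ (parClass l) = δhatΛ l.label)
    (v : V) (hv : v ∈ BΓ) (w : W) (hw : w ∈ BΛ) :
    (∃ (f : Raag Γ → Raag Λ) (fs : Set (Set (Raag Γ)) → Set (Set (Raag Λ))),
        IsDecorBasedRelQI Γ Λ BΓ BΛ δΓ δΛ (⟨1, v⟩ : StdGeod Γ) (⟨1, w⟩ : StdGeod Λ) f fs) ↔
      (n = m ∧ ∃ r : V → W, Set.BijOn r BΓ BΛ ∧ (∀ u ∈ BΓ, δhatΛ (r u) = δhatΓ u) ∧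
        r v = w) :=
  stmt18_general Γ Λ hΓ hΛ n m hn hm O BΓ BΛ δhatΓ δhatΛ δΓ δΛ hδΓ hδΛ v hv w

end
end
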